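/- arXiv:1401.0911 — 4 statements merged into one kernel-verified Lean document; each statement's English description precedes it below -/
import Mathlib

section
/- Let n>0, p>1, and Ω₀⊂ℝ a bounded interval. Then there exists C>0 such that for every nonnegative u∈C⁰(closure of Ω₀) with u∈C¹({u>0}), one has ∫_{Ω₀} u^p dx ≤ C { (∫_{Ω₀} u dx)^{(n+3p)/(n+3)} (∫_{Ω₀} χ_{{u>0}} u^{n-4} u_x⁴ dx)^{(p-1)/(n+3)} + (∫_{Ω₀} u dx)^p }. -/
/-!
Let `M = u x₀` be the maximum of `u`. Wherever `M / 2 ≤ u ≤ M`, the weight `u ^ (n - 4)` is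
comparable to `M ^ (n - 4)`, so Hölder's inequality and the fundamental theorem of calculus give
the Morrey-type bound `M ^ (n - 4) * |u t - u s| ^ 4 ≲ D * |t - s| ^ 3`, where `D` is the weighted
energy. Hence `u` cannot fall to `M / 2` within distance `ℓ ≈ (M ^ n / D) ^ (1 / 3)` of `x₀`, and
`∫ u ≳ M * min ℓ (b - a)`, i.e. `M ≲ (∫ u) ^ (3 / (n + 3)) * D ^ (1 / (n + 3)) + ∫ u`.
Together with `∫ u ^ p ≤ M ^ (p - 1) * ∫ u` this is the inequality.
-/

open MeasureTheory Real Set Filter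

noncomputable def quarticDerivEnergy (n : ℝ) (u : ℝ → ℝ) (s : Set ℝ) : ENNReal :=
  ∫⁻ x in s, ENNReal.ofReal (Set.indicator {y | 0 < u y}
    (fun y => u y ^ (n - 4) * (deriv u y) ^ 4) x)

theorem quarticDerivEnergy_mono {n : ℝ} {u : ℝ → ℝ} {s t : Set ℝ} (hst : s ⊆ t) :
    quarticDerivEnergy n u s ≤ quarticDerivEnergy n u t :=
  lintegral_mono_set hst

theorem min_rpow_mul_rpow_le_rpow {c M y γ : ℝ} (hc : 0 < c) (hM : 0 < M) (hcy : c * M ≤ y)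
    (hyM : y ≤ M) : min (c ^ γ) 1 * M ^ γ ≤ y ^ γ := by
  have hy : 0 < y := (mul_pos hc hM).trans_le hcy
  rcases le_total 0 γ with hγ | hγ
  · calc min (c ^ γ) 1 * M ^ γ ≤ c ^ γ * M ^ γ := by gcongr; exact min_le_left _ _
      _ = (c * M) ^ γ := (mul_rpow hc.le hM.le).symm
      _ ≤ y ^ γ := rpow_le_rpow (by positivity) hcy hγ
  · calc min (c ^ γ) 1 * M ^ γ ≤ 1 * M ^ γ := by gcongr; exact min_le_right _ _
      _ = M ^ γ := one_mul _
      _ ≤ y ^ γ := rpow_le_rpow_of_nonpos hy hyM hγ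

theorem rpow_le_rpow_sub_one_mul {y M p : ℝ} (hy : 0 ≤ y) (hyM : y ≤ M) (hp : 1 ≤ p) :
    y ^ p ≤ M ^ (p - 1) * y := by
  calc y ^ p = y ^ (p - 1) * y := by rw [← rpow_add_one' hy (by linarith), sub_add_cancel]
    _ ≤ M ^ (p - 1) * y := by gcongr

theorem le_or_le_of_forall_cube_le {A B I d L : ℝ} (hA : 0 ≤ A) (hB : 0 ≤ B) (hd : 0 ≤ d)
    (hL : 0 ≤ L) (h : ∀ ℓ, 0 ≤ ℓ → ℓ ≤ L → d * ℓ ^ 3 ≤ A → B * ℓ ≤ I) :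
    B * L ≤ I ∨ B ^ 3 * A ≤ I ^ 3 * d := by
  by_cases hdL : d * L ^ 3 ≤ A
  · exact .inl (h L hL le_rfl hdL)
  right
  have hd₀ : 0 < d := hd.lt_of_ne (by rintro rfl; simp at hdL; linarith)
  set ℓ := (A / d) ^ ((3 : ℕ)⁻¹ : ℝ)
  have hℓ : ℓ ^ 3 = A / d := rpow_inv_natCast_pow (by positivity) three_ne_zero
  have hℓL : ℓ ≤ L := by
    refine le_of_pow_le_pow_left₀ three_ne_zero hL ?_
    rw [hℓ, div_le_iff₀' hd₀]
    linarith
  have hBℓ := pow_le_pow_left₀ (by positivity)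
    (h ℓ (by positivity) hℓL (by rw [hℓ, mul_div_cancel₀ _ hd₀.ne'])) 3
  rwa [mul_pow, hℓ, ← mul_div_assoc, div_le_iff₀ hd₀] at hBℓ

theorem rpow_sub_one_mul_le_of_le_or_le {n p M I d K L : ℝ} (hn : 0 < n + 3) (hp : 1 ≤ p)
    (hM : 0 ≤ M) (hI : 0 ≤ I) (hd : 0 ≤ d) (hK : 0 ≤ K) (hL : 0 ≤ L)
    (h : M ^ (n + 3) ≤ K * I ^ 3 * d ∨ M ≤ L * I) :
    M ^ (p - 1) * I ≤ (K ^ ((p - 1) / (n + 3)) + L ^ (p - 1)) *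
      (I ^ ((n + 3 * p) / (n + 3)) * d ^ ((p - 1) / (n + 3)) + I ^ p) := by
  set β := (p - 1) / (n + 3) with hβ_def
  have hβ : 0 ≤ β := div_nonneg (by linarith) hn.le
  have hK' : 0 ≤ K ^ β := rpow_nonneg hK _
  have hL' : 0 ≤ L ^ (p - 1) := rpow_nonneg hL _
  have hX : 0 ≤ I ^ ((n + 3 * p) / (n + 3)) * d ^ β := by positivity
  have hY : 0 ≤ I ^ p := rpow_nonneg hI _
  rcases h with h | h
  · have hexp : I ^ (3 * β) * I = I ^ ((n + 3 * p) / (n + 3)) := by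
      rw [← rpow_add_one' hI (by positivity), hβ_def]
      congr 1
      field_simp
      ring
    calc M ^ (p - 1) * I = (M ^ (n + 3)) ^ β * I := by
          rw [← rpow_mul hM, mul_div_cancel₀ _ hn.ne']
      _ ≤ (K * I ^ 3 * d) ^ β * I := by gcongr
      _ = K ^ β * (I ^ ((n + 3 * p) / (n + 3)) * d ^ β) := by
          rw [mul_rpow (by positivity) hd, mul_rpow hK (by positivity), ← rpow_natCast,
            ← rpow_mul hI, ← hexp]
          push_cast
          ring
      _ ≤ _ := mul_le_mul (le_add_of_nonneg_right hL') (le_add_of_nonneg_right hY) hX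
          (by positivity)
  · calc M ^ (p - 1) * I ≤ (L * I) ^ (p - 1) * I := by gcongr
      _ = L ^ (p - 1) * I ^ p := by
          rw [mul_rpow hL hI, mul_assoc, ← rpow_add_one' hI (by linarith), sub_add_cancel]
      _ ≤ _ := mul_le_mul (le_add_of_nonneg_left hK') (le_add_of_nonneg_left hX) hY
          (by positivity)

theorem ofReal_mul_le_ofReal_mul_rpow_mul_rpow_add_rpow {M C α β p : ℝ} {I E : ENNReal}
    (hI : I ≠ ⊤) (hC : 0 < C) (hα : 0 < α) (hβ : 0 < β) (hp : 0 ≤ p)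
    (h : E ≠ ⊤ → M * I.toReal ≤ C * (I.toReal ^ α * E.toReal ^ β + I.toReal ^ p)) :
    ENNReal.ofReal M * I ≤ ENNReal.ofReal C * (I ^ α * E ^ β + I ^ p) := by
  by_cases hE : E = ⊤
  · by_cases hI₀ : I = 0
    · simp [hI₀]
    rw [hE, ENNReal.top_rpow_of_pos hβ, ENNReal.mul_top (by simp [hI₀, hI, hα]),
      top_add, ENNReal.mul_top (by simpa using hC)]
    exact le_top
  rw [← ENNReal.ofReal_toReal hI, ← ENNReal.ofReal_toReal hE,
    ENNReal.ofReal_rpow_of_nonneg ENNReal.toReal_nonneg hα.le,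
    ENNReal.ofReal_rpow_of_nonneg ENNReal.toReal_nonneg hβ.le,
    ENNReal.ofReal_rpow_of_nonneg ENNReal.toReal_nonneg hp, ← ENNReal.ofReal_mul',
    ← ENNReal.ofReal_mul', ← ENNReal.ofReal_add, ← ENNReal.ofReal_mul hC.le]
  · exact ENNReal.ofReal_le_ofReal (h hE)
  all_goals positivity

section FirstHit

variable {α δ : Type*} [ConditionallyCompleteLinearOrder α] [TopologicalSpace α] [OrderTopology α]
  [DenselyOrdered α] [LinearOrder δ] [TopologicalSpace δ] [OrderClosedTopology δ]
  {f : α → δ} {a b : α} {θ : δ}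

theorem exists_mem_Icc_eq_and_forall_le (hab : a ≤ b) (hf : ContinuousOn f (Icc a b))
    (hb : f b ≤ θ) (ha : θ ≤ f a) : ∃ c ∈ Icc a b, f c = θ ∧ ∀ y ∈ Icc a c, θ ≤ f y := by
  set S := Icc a b ∩ f ⁻¹' Iic θ
  have hbdd : BddBelow S := ⟨a, fun y hy => hy.1.1⟩
  have hcS : sInf S ∈ S :=
    (hf.preimage_isClosed_of_isClosed isClosed_Icc isClosed_Iic).csInf_mem
      ⟨b, ⟨hab, le_rfl⟩, hb⟩ hbdd
  set c := sInf S
  obtain ⟨c', hc', hfc'⟩ :=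
    intermediate_value_Icc' hcS.1.1 (hf.mono (Icc_subset_Icc_right hcS.1.2)) ⟨hcS.2, ha⟩
  have hc'c : c' = c :=
    le_antisymm hc'.2 (csInf_le hbdd ⟨⟨hc'.1, hc'.2.trans hcS.1.2⟩, hfc'.le⟩)
  rw [hc'c] at hfc'
  refine ⟨c, hcS.1, hfc', fun y hy => ?_⟩
  rcases hy.2.lt_or_eq with hyc | rfl
  · exact le_of_not_ge fun hfy => (csInf_le hbdd ⟨⟨hy.1, hy.2.trans hcS.1.2⟩, hfy⟩).not_gt hyc
  · exact hfc'.ge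

theorem exists_mem_uIcc_eq_and_forall_le (hf : ContinuousOn f (uIcc a b))
    (hb : f b ≤ θ) (ha : θ ≤ f a) : ∃ c ∈ uIcc a b, f c = θ ∧ ∀ y ∈ uIcc a c, θ ≤ f y := by
  rcases le_total a b with hab | hba
  · rw [uIcc_of_le hab] at hf
    obtain ⟨c, hc, hfc, hle⟩ := exists_mem_Icc_eq_and_forall_le hab hf hb ha
    exact ⟨c, uIcc_of_le hab ▸ hc, hfc, by rwa [uIcc_of_le hc.1]⟩
  · rw [uIcc_of_ge hba] at hf
    obtain ⟨c, hc, hfc, hle⟩ := exists_mem_Icc_eq_and_forall_le (α := αᵒᵈ)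
      (f := f ∘ OrderDual.ofDual) (a := OrderDual.toDual a) (b := OrderDual.toDual b) hba
      (hf.comp continuous_ofDual.continuousOn fun y hy => ⟨hy.2, hy.1⟩) hb ha
    refine ⟨OrderDual.ofDual c, ?_, hfc, ?_⟩
    · rw [uIcc_of_ge hba]
      exact ⟨hc.2, hc.1⟩
    · rw [uIcc_of_ge (show OrderDual.ofDual c ≤ a from hc.1)]
      exact fun y hy => hle (OrderDual.toDual y) ⟨hy.2, hy.1⟩

end FirstHit

theorem lintegral_le_lintegral_rpow_mul_measure_univ_rpow {α : Type*} [MeasurableSpace α]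
    {μ : Measure α} {g : α → ENNReal} {q : ℝ} (hq : 1 < q) (hg : AEMeasurable g μ) :
    ∫⁻ x, g x ∂μ ≤ (∫⁻ x, g x ^ q ∂μ) ^ q⁻¹ * μ univ ^ (1 - q⁻¹) := by
  have key := ENNReal.lintegral_mul_le_Lp_mul_Lq μ (.conjExponent hq) hg
    (aemeasurable_const (b := 1))
  simp only [Pi.mul_apply, mul_one, ENNReal.one_rpow, lintegral_const, one_mul] at key
  convert key using 3
  · exact (one_div q).symm
  · rw [Real.conjExponent, one_div_div]
    field_simp

theorem abs_sub_rpow_le_of_lintegral_abs_deriv_rpow_le {u : ℝ → ℝ} {s t q E : ℝ} (hq : 1 < q)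
    (hst : s ≤ t) (hdiff : ∀ x ∈ Icc s t, DifferentiableAt ℝ u x) (hE₀ : 0 ≤ E)
    (hE : ∫⁻ x in Ioo s t, ENNReal.ofReal (|deriv u x| ^ q) ≤ ENNReal.ofReal E) :
    |u t - u s| ^ q ≤ E * (t - s) ^ (q - 1) := by
  have hq₀ : 0 < q := by linarith
  have hHolder : ∫⁻ x in Ioc s t, ‖deriv u x‖ₑ ≤
      ENNReal.ofReal E ^ q⁻¹ * ENNReal.ofReal (t - s) ^ (1 - q⁻¹) := by
    refine (lintegral_le_lintegral_rpow_mul_measure_univ_rpow hq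
      (measurable_deriv u).enorm.aemeasurable).trans ?_
    rw [Measure.restrict_apply_univ, Real.volume_Ioc, ← setLIntegral_congr Ioo_ae_eq_Ioc]
    simp_rw [Real.enorm_eq_ofReal_abs, ENNReal.ofReal_rpow_of_nonneg (abs_nonneg _) hq₀.le]
    gcongr
  have hint : IntervalIntegrable (deriv u) volume s t :=
    (intervalIntegrable_iff_integrableOn_Ioc_of_le hst).2
      ⟨(measurable_deriv u).aestronglyMeasurable, hHolder.trans_lt <| ENNReal.mul_lt_top
        (ENNReal.rpow_lt_top_of_nonneg (inv_nonneg.2 hq₀.le) ENNReal.ofReal_ne_top)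
        (ENNReal.rpow_lt_top_of_nonneg (sub_nonneg.2 (inv_le_one_of_one_le₀ hq.le))
          ENNReal.ofReal_ne_top)⟩
  have hftc : ∫ x in s..t, deriv u x = u t - u s :=
    intervalIntegral.integral_eq_sub_of_hasDerivAt
      (fun x hx => (hdiff x (uIcc_of_le hst ▸ hx)).hasDerivAt) hint
  have habs : ENNReal.ofReal |u t - u s| ≤
      ENNReal.ofReal E ^ q⁻¹ * ENNReal.ofReal (t - s) ^ (1 - q⁻¹) := by
    rw [← Real.enorm_eq_ofReal_abs, ← hftc, intervalIntegral.integral_of_le hst]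
    exact (enorm_integral_le_lintegral_enorm _).trans hHolder
  have hpow := ENNReal.rpow_le_rpow habs hq₀.le
  rw [ENNReal.mul_rpow_of_nonneg _ _ hq₀.le, ENNReal.rpow_inv_rpow hq₀.ne', ← ENNReal.rpow_mul,
    show (1 - q⁻¹) * q = q - 1 by field_simp, ENNReal.ofReal_rpow_of_nonneg (abs_nonneg _) hq₀.le,
    ENNReal.ofReal_rpow_of_nonneg (sub_nonneg.2 hst) (by linarith),
    ← ENNReal.ofReal_mul hE₀] at hpow
  exact (ENNReal.ofReal_le_ofReal_iff (by positivity)).1 hpow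

theorem ofReal_le_volume_Ioo_inter_ball {a b x ℓ : ℝ} (hx : x ∈ Icc a b) (hℓ₀ : 0 ≤ ℓ)
    (hℓ : ℓ ≤ b - a) : ENNReal.ofReal ℓ ≤ volume (Ioo a b ∩ Metric.ball x ℓ) := by
  rw [Real.ball_eq_Ioo, Ioo_inter_Ioo, Real.volume_Ioo]
  apply ENNReal.ofReal_le_ofReal
  rcases max_cases a (x - ℓ) with ⟨h₁, _⟩ | ⟨h₁, _⟩ <;>
    rcases min_cases b (x + ℓ) with ⟨h₂, _⟩ | ⟨h₂, _⟩ <;>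
    rw [h₁, h₂] <;> linarith [hx.1, hx.2]

theorem setLIntegral_ofReal_rpow_le {α : Type*} [MeasurableSpace α] {μ : Measure α} {u : α → ℝ}
    {s : Set α} {M p : ℝ} (hs : MeasurableSet s) (hp : 1 ≤ p) (hu₀ : ∀ x ∈ s, 0 ≤ u x)
    (huM : ∀ x ∈ s, u x ≤ M) :
    ∫⁻ x in s, ENNReal.ofReal (u x ^ p) ∂μ ≤
      ENNReal.ofReal (M ^ (p - 1)) * ∫⁻ x in s, ENNReal.ofReal (u x) ∂μ := by
  rw [← lintegral_const_mul' _ _ ENNReal.ofReal_ne_top]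
  refine setLIntegral_mono' hs fun x hx => ?_
  rw [← ENNReal.ofReal_mul' (hu₀ x hx)]
  exact ENNReal.ofReal_le_ofReal (rpow_le_rpow_sub_one_mul (hu₀ x hx) (huM x hx) hp)

theorem setLIntegral_Ioo_ofReal_ne_top_of_isMaxOn {u : ℝ → ℝ} {a b x₀ : ℝ}
    (hmax : IsMaxOn u (Icc a b) x₀) : ∫⁻ x in Ioo a b, ENNReal.ofReal (u x) ≠ ⊤ :=
  (setLIntegral_lt_top_of_le_nnreal (by simp [Real.volume_Ioo])
    ⟨(u x₀).toNNReal, fun _ hx => ENNReal.ofReal_le_ofReal (hmax (Ioo_subset_Icc_self hx))⟩).ne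

theorem min_rpow_mul_abs_sub_pow_le {n c M E s t : ℝ} {u : ℝ → ℝ} (hc : 0 < c) (hM : 0 < M)
    (hdiff : ∀ x, 0 < u x → DifferentiableAt ℝ u x) (hlow : ∀ x ∈ uIcc s t, c * M ≤ u x)
    (hup : ∀ x ∈ uIcc s t, u x ≤ M) (hE₀ : 0 ≤ E)
    (hE : quarticDerivEnergy n u (uIoo s t) ≤ ENNReal.ofReal E) :
    min (c ^ (n - 4)) 1 * M ^ (n - 4) * |u t - u s| ^ 4 ≤ E * |t - s| ^ 3 := by
  wlog hst : s ≤ t generalizing s t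
  · rw [abs_sub_comm (u t), abs_sub_comm t]
    exact this (uIcc_comm s t ▸ hlow) (uIcc_comm s t ▸ hup) (uIoo_comm s t ▸ hE)
      (le_of_not_ge hst)
  rw [uIcc_of_le hst] at hlow hup
  rw [uIoo_of_le hst] at hE
  set m := min (c ^ (n - 4)) 1 * M ^ (n - 4)
  have hm : 0 < m := by positivity
  have hpos : ∀ x ∈ Icc s t, 0 < u x := fun x hx => (mul_pos hc hM).trans_le (hlow x hx)
  have hweight : ∀ x ∈ Ioo s t, ENNReal.ofReal m * ENNReal.ofReal (|deriv u x| ^ (4 : ℝ)) ≤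
      ENNReal.ofReal ({y | 0 < u y}.indicator (fun y => u y ^ (n - 4) * deriv u y ^ 4) x) := by
    intro x hx
    have hx' := Ioo_subset_Icc_self hx
    rw [indicator_of_mem (show x ∈ {y | 0 < u y} from hpos x hx'), ← ENNReal.ofReal_mul hm.le,
      rpow_ofNat, Even.pow_abs (by decide)]
    exact ENNReal.ofReal_le_ofReal (mul_le_mul_of_nonneg_right
      (min_rpow_mul_rpow_le_rpow hc hM (hlow x hx') (hup x hx')) (Even.pow_nonneg (by decide) _))
  have hderiv :
      ∫⁻ x in Ioo s t, ENNReal.ofReal (|deriv u x| ^ (4 : ℝ)) ≤ ENNReal.ofReal (E / m) := by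
    rw [ENNReal.ofReal_div_of_pos hm,
      ENNReal.le_div_iff_mul_le (.inl (by simpa using hm)) (.inl ENNReal.ofReal_ne_top), mul_comm]
    calc ENNReal.ofReal m * ∫⁻ x in Ioo s t, ENNReal.ofReal (|deriv u x| ^ (4 : ℝ))
        ≤ ∫⁻ x in Ioo s t, ENNReal.ofReal m * ENNReal.ofReal (|deriv u x| ^ (4 : ℝ)) :=
          lintegral_const_mul_le _ _
      _ ≤ quarticDerivEnergy n u (Ioo s t) := setLIntegral_mono' measurableSet_Ioo hweight
      _ ≤ ENNReal.ofReal E := hE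
  have hosc := abs_sub_rpow_le_of_lintegral_abs_deriv_rpow_le (by norm_num) hst
    (fun x hx => hdiff x (hpos x hx)) (by positivity) hderiv
  rw [show (4 : ℝ) - 1 = 3 by norm_num, rpow_ofNat, rpow_ofNat, div_mul_eq_mul_div,
    le_div_iff₀ hm] at hosc
  rw [abs_of_nonneg (sub_nonneg.2 hst)]
  linarith

theorem min_rpow_mul_pow_le_of_le_half {n d a b x₀ y : ℝ} {u : ℝ → ℝ}
    (hu : ContinuousOn u (Icc a b)) (hx₀ : x₀ ∈ Icc a b) (hmax : IsMaxOn u (Icc a b) x₀)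
    (hM : 0 < u x₀) (hdiff : ∀ x, 0 < u x → DifferentiableAt ℝ u x) (hd : 0 ≤ d)
    (hE : quarticDerivEnergy n u (Ioo a b) ≤ ENNReal.ofReal d) (hy : y ∈ Icc a b)
    (hyM : u y ≤ u x₀ / 2) :
    min ((1 / 2) ^ (n - 4)) 1 * u x₀ ^ (n - 4) * (u x₀ / 2) ^ 4 ≤ d * |y - x₀| ^ 3 := by
  have hsub : uIcc x₀ y ⊆ Icc a b := uIcc_subset_Icc hx₀ hy
  obtain ⟨c, hc, huc, hlow⟩ :=
    exists_mem_uIcc_eq_and_forall_le (hu.mono hsub) hyM (by linarith)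
  have hc' : c ∈ Icc a b := hsub hc
  have hsub' : uIcc x₀ c ⊆ Icc a b := uIcc_subset_Icc hx₀ hc'
  have hosc := min_rpow_mul_abs_sub_pow_le (s := x₀) (t := c) one_half_pos hM hdiff
    (fun x hx => by linarith [hlow x hx]) (fun x hx => hmax (hsub' hx)) hd
    ((quarticDerivEnergy_mono (Ioo_subset_Ioo (le_min hx₀.1 hc'.1) (max_le hx₀.2 hc'.2))).trans
      hE)
  rw [huc, show u x₀ / 2 - u x₀ = -(u x₀ / 2) by ring, abs_neg, abs_of_pos (half_pos hM)] at hosc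
  calc _ ≤ d * |c - x₀| ^ 3 := hosc
    _ ≤ d * |y - x₀| ^ 3 := mul_le_mul_of_nonneg_left
      (pow_le_pow_left₀ (abs_nonneg _) (abs_sub_left_of_mem_uIcc hc) 3) hd

theorem rpow_le_mul_toReal_pow_mul_or_le_mul_toReal {n d a b x₀ : ℝ} {u : ℝ → ℝ} (hab : a < b)
    (hu : ContinuousOn u (Icc a b)) (hx₀ : x₀ ∈ Icc a b) (hmax : IsMaxOn u (Icc a b) x₀)
    (hM : 0 < u x₀) (hdiff : ∀ x, 0 < u x → DifferentiableAt ℝ u x) (hd : 0 ≤ d)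
    (hE : quarticDerivEnergy n u (Ioo a b) ≤ ENNReal.ofReal d) :
    u x₀ ^ (n + 3) ≤ 128 / min ((1 / 2) ^ (n - 4)) 1 *
        (∫⁻ x in Ioo a b, ENNReal.ofReal (u x)).toReal ^ 3 * d ∨
      u x₀ ≤ 2 / (b - a) * (∫⁻ x in Ioo a b, ENNReal.ofReal (u x)).toReal := by
  set M := u x₀
  set I := ∫⁻ x in Ioo a b, ENNReal.ofReal (u x)
  set κ := min ((1 / 2 : ℝ) ^ (n - 4)) 1
  have hκ : 0 < κ := by positivity
  have hlower : ∀ ℓ, 0 ≤ ℓ → ℓ ≤ b - a → d * ℓ ^ 3 ≤ κ * M ^ (n - 4) * (M / 2) ^ 4 →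
      M / 2 * ℓ ≤ I.toReal := by
    intro ℓ hℓ₀ hℓ hdℓ
    have hlarge : ∀ y ∈ Ioo a b ∩ Metric.ball x₀ ℓ, M / 2 ≤ u y := by
      intro y ⟨hy, hyx⟩
      by_contra! hlt
      have hA : κ * M ^ (n - 4) * (M / 2) ^ 4 ≤ d * |y - x₀| ^ 3 :=
        min_rpow_mul_pow_le_of_le_half hu hx₀ hmax hM hdiff hd hE (Ioo_subset_Icc_self hy) hlt.le
      have hA₀ : 0 < κ * M ^ (n - 4) * (M / 2) ^ 4 := by positivity
      have hd₀ : 0 < d := hd.lt_of_ne (by rintro rfl; rw [zero_mul] at hA; linarith)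
      rw [Metric.mem_ball, Real.dist_eq] at hyx
      have : d * |y - x₀| ^ 3 < d * ℓ ^ 3 := by gcongr
      linarith
    rw [← ENNReal.ofReal_le_iff_le_toReal (setLIntegral_Ioo_ofReal_ne_top_of_isMaxOn hmax),
      ENNReal.ofReal_mul (by positivity)]
    calc ENNReal.ofReal (M / 2) * ENNReal.ofReal ℓ
        ≤ ENNReal.ofReal (M / 2) * volume (Ioo a b ∩ Metric.ball x₀ ℓ) := by
          gcongr
          exact ofReal_le_volume_Ioo_inter_ball hx₀ hℓ₀ hℓ
      _ = ∫⁻ _ in Ioo a b ∩ Metric.ball x₀ ℓ, ENNReal.ofReal (M / 2) :=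
          (setLIntegral_const _ _).symm
      _ ≤ ∫⁻ x in Ioo a b ∩ Metric.ball x₀ ℓ, ENNReal.ofReal (u x) :=
          setLIntegral_mono' (measurableSet_Ioo.inter measurableSet_ball)
            fun y hy => ENNReal.ofReal_le_ofReal (hlarge y hy)
      _ ≤ I := lintegral_mono_set inter_subset_left
  rcases le_or_le_of_forall_cube_le (by positivity) (by positivity) hd (by linarith) hlower
    with h | h
  · right
    rw [div_mul_eq_mul_div, le_div_iff₀ (by linarith)]
    linarith
  · left
    have hMpow : M ^ (n - 4) * M ^ 7 = M ^ (n + 3) := by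
      rw [← rpow_natCast, ← rpow_add hM]
      congr 1
      push_cast
      ring
    rw [div_mul_eq_mul_div, div_mul_eq_mul_div, le_div_iff₀ hκ, ← hMpow]
    linarith

theorem stmt4 (n p a b : ℝ) (hn : 0 < n) (hp : 1 < p) (hab : a < b) :
    ∃ C > 0, ∀ u : ℝ → ℝ,
      ContinuousOn u (Set.Icc a b) → (∀ x ∈ Set.Icc a b, 0 ≤ u x) →
      (∀ x, 0 < u x → DifferentiableAt ℝ u x) →
      (∫⁻ x in Set.Ioo a b, ENNReal.ofReal (u x ^ p)) ≤
        ENNReal.ofReal C *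
          ((∫⁻ x in Set.Ioo a b, ENNReal.ofReal (u x)) ^ ((n + 3 * p) / (n + 3)) *
            (∫⁻ x in Set.Ioo a b, ENNReal.ofReal
              (Set.indicator {y | 0 < u y}
                (fun y => u y ^ (n - 4) * (deriv u y) ^ 4) x)) ^ ((p - 1) / (n + 3))
          + (∫⁻ x in Set.Ioo a b, ENNReal.ofReal (u x)) ^ p) := by
  have hn₃ : 0 < n + 3 := by linarith
  have hba : 0 < b - a := sub_pos.2 hab
  refine ⟨(128 / min ((1 / 2) ^ (n - 4)) 1) ^ ((p - 1) / (n + 3)) + (2 / (b - a)) ^ (p - 1),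
    by positivity, fun u hu hu₀ hdiff => ?_⟩
  obtain ⟨x₀, hx₀, hmax⟩ := isCompact_Icc.exists_isMaxOn (nonempty_Icc.2 hab.le) hu
  set I := ∫⁻ x in Ioo a b, ENNReal.ofReal (u x)
  change _ ≤ _ * (I ^ _ * quarticDerivEnergy n u (Ioo a b) ^ _ + I ^ p)
  refine (setLIntegral_ofReal_rpow_le measurableSet_Ioo hp.le
    (fun x hx => hu₀ x (Ioo_subset_Icc_self hx)) fun x hx => hmax (Ioo_subset_Icc_self hx)).trans ?_
  rcases (hu₀ x₀ hx₀).eq_or_lt with hM | hM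
  · simp [← hM, zero_rpow (sub_ne_zero.2 hp.ne')]
  refine ofReal_mul_le_ofReal_mul_rpow_mul_rpow_add_rpow
    (setLIntegral_Ioo_ofReal_ne_top_of_isMaxOn hmax) (by positivity)
    (div_pos (by linarith) hn₃) (div_pos (by linarith) hn₃) (by linarith) fun hE => ?_
  exact rpow_sub_one_mul_le_of_le_or_le hn₃ hp.le hM.le ENNReal.toReal_nonneg
    ENNReal.toReal_nonneg (by positivity) (by positivity)
    (rpow_le_mul_toReal_pow_mul_or_le_mul_toReal hab hu hx₀ hmax hM hdiff ENNReal.toReal_nonneg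
      (ENNReal.ofReal_toReal hE).ge)
end

section
/- Let a>0, b>0, d>0, m>1 with a>2d, and let T>0 and y∈C⁰([0,T]) be nonnegative and satisfy y(t) ≥ a + b ∫₀ᵗ (y(s)-d)₊^m ds for all t∈[0,T]. Then T < 2^m / ((m-1) b a^{m-1}). -/
/-!
Put `F t = a + b ∫₀ᵗ (y - d)₊ ^ m`, so that `F ≤ y`. Since `F ≥ a > 2d`, we get
`y - d ≥ F - d ≥ F / 2`, hence `F' ≥ (b / 2 ^ m) F ^ m`. For such a superlinear differential
inequality, `F ^ (1 - m)` decreases at rate at least `(m - 1) b / 2 ^ m` while staying positive,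
which bounds the length of the interval by `a ^ (1 - m) 2 ^ m / ((m - 1) b)`.
-/

open MeasureTheory Real Set Filter

section Primitive

variable {E : Type*} [NormedAddCommGroup E] [NormedSpace ℝ E] {f : ℝ → E} {t₀ t₁ : ℝ}

theorem continuousOn_integral_of_continuousOn_Icc (hf : ContinuousOn f (Icc t₀ t₁))
    (ht : t₀ ≤ t₁) : ContinuousOn (fun u => ∫ s in t₀..u, f s) (Icc t₀ t₁) := by
  simpa only [uIcc_of_le ht] using intervalIntegral.continuousOn_primitive_interval'
    (hf.intervalIntegrable_of_Icc ht) left_mem_uIcc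

theorem hasDerivAt_integral_of_continuousOn_Icc [CompleteSpace E] {t : ℝ}
    (hf : ContinuousOn f (Icc t₀ t₁)) (ht : t ∈ Ioo t₀ t₁) :
    HasDerivAt (fun u => ∫ s in t₀..u, f s) (f t) t :=
  intervalIntegral.integral_hasDerivAt_right
    ((hf.mono (Icc_subset_Icc_right ht.2.le)).intervalIntegrable_of_Icc ht.1.le)
    ((hf.mono Ioo_subset_Icc_self).stronglyMeasurableAtFilter isOpen_Ioo t ht)
    (hf.continuousAt (Icc_mem_nhds ht.1 ht.2))

end Primitive

section SuperlinearGrowth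

variable {F F' : ℝ → ℝ} {c m t₀ t₁ : ℝ}

theorem antitoneOn_rpow_one_sub_add_of_mul_rpow_le_deriv (hm : 1 < m)
    (hF : ContinuousOn F (Icc t₀ t₁)) (hpos : ∀ t ∈ Icc t₀ t₁, 0 < F t)
    (hF' : ∀ t ∈ Ioo t₀ t₁, HasDerivAt F (F' t) t)
    (hgrowth : ∀ t ∈ Ioo t₀ t₁, c * F t ^ m ≤ F' t) :
    AntitoneOn (fun t => F t ^ (1 - m) + (m - 1) * c * t) (Icc t₀ t₁) := by
  have hcont : ContinuousOn (fun t => F t ^ (1 - m) + (m - 1) * c * t) (Icc t₀ t₁) :=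
    (hF.rpow_const fun t ht => Or.inl (hpos t ht).ne').add
      (continuousOn_const.mul continuousOn_id)
  have hderiv : ∀ t ∈ Ioo t₀ t₁, HasDerivAt (fun t => F t ^ (1 - m) + (m - 1) * c * t)
      (F' t * (1 - m) * F t ^ (1 - m - 1) + (m - 1) * c) t := fun t ht =>
    ((hF' t ht).rpow_const (Or.inl (hpos t (Ioo_subset_Icc_self ht)).ne')).add
      ((hasDerivAt_id t).const_mul ((m - 1) * c) |>.congr_deriv (mul_one _))
  have hderiv_nonpos : ∀ t ∈ Ioo t₀ t₁,
      F' t * (1 - m) * F t ^ (1 - m - 1) + (m - 1) * c ≤ 0 := by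
    intro t ht
    have hFt := hpos t (Ioo_subset_Icc_self ht)
    have hinv : F t ^ (1 - m - 1) * F t ^ m = 1 := by rw [← rpow_add hFt]; norm_num
    have hcoef : (1 - m) * F t ^ (1 - m - 1) ≤ 0 :=
      mul_nonpos_of_nonpos_of_nonneg (by linarith) (rpow_nonneg hFt.le _)
    calc F' t * (1 - m) * F t ^ (1 - m - 1) + (m - 1) * c
        = (1 - m) * F t ^ (1 - m - 1) * F' t + (m - 1) * c := by ring
      _ ≤ (1 - m) * F t ^ (1 - m - 1) * (c * F t ^ m) + (m - 1) * c := by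
        gcongr ?_ + _
        exact mul_le_mul_of_nonpos_left (hgrowth t ht) hcoef
      _ = 0 := by linear_combination (1 - m) * c * hinv
  exact antitoneOn_of_hasDerivWithinAt_nonpos (convex_Icc t₀ t₁) hcont
    (by simpa only [interior_Icc] using fun t ht => (hderiv t ht).hasDerivWithinAt)
    (by simpa only [interior_Icc] using hderiv_nonpos)

theorem sub_lt_of_mul_rpow_le_deriv (hc : 0 < c) (hm : 1 < m) (ht : t₀ ≤ t₁)
    (hF : ContinuousOn F (Icc t₀ t₁)) (hpos : ∀ t ∈ Icc t₀ t₁, 0 < F t)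
    (hF' : ∀ t ∈ Ioo t₀ t₁, HasDerivAt F (F' t) t)
    (hgrowth : ∀ t ∈ Ioo t₀ t₁, c * F t ^ m ≤ F' t) :
    t₁ - t₀ < 1 / ((m - 1) * c * F t₀ ^ (m - 1)) := by
  have h₀ : t₀ ∈ Icc t₀ t₁ := left_mem_Icc.2 ht
  have h₁ : t₁ ∈ Icc t₀ t₁ := right_mem_Icc.2 ht
  have hdecay : (m - 1) * c * (t₁ - t₀) < F t₀ ^ (1 - m) := by
    have hle := antitoneOn_rpow_one_sub_add_of_mul_rpow_le_deriv hm hF hpos hF' hgrowth h₀ h₁ ht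
    have hF₁ : 0 < F t₁ ^ (1 - m) := rpow_pos_of_pos (hpos t₁ h₁) _
    simp only at hle
    linarith
  have hF₀ : F t₀ ^ (1 - m) * F t₀ ^ (m - 1) = 1 := by
    rw [← rpow_add (hpos t₀ h₀)]; norm_num
  have hF₀_pos : 0 < F t₀ ^ (m - 1) := rpow_pos_of_pos (hpos t₀ h₀) _
  rw [lt_div_iff₀ (by have := sub_pos.2 hm; positivity)]
  calc (t₁ - t₀) * ((m - 1) * c * F t₀ ^ (m - 1))
      = (m - 1) * c * (t₁ - t₀) * F t₀ ^ (m - 1) := by ring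
    _ < F t₀ ^ (1 - m) * F t₀ ^ (m - 1) := by gcongr
    _ = 1 := hF₀

end SuperlinearGrowth

theorem stmt5_general (a b d m T : ℝ) (ha : 0 < a) (hb : 0 < b) (hm : 1 < m)
    (had : 2 * d < a) (hT : 0 < T) (y : ℝ → ℝ)
    (hy : ContinuousOn y (Set.Icc 0 T))
    (hineq : ∀ t ∈ Set.Icc 0 T,
      a + b * ∫ s in (0:ℝ)..t, (max (y s - d) 0) ^ m ≤ y t) :
    T < 2 ^ m / ((m - 1) * b * a ^ (m - 1)) := by
  set g : ℝ → ℝ := fun s => max (y s - d) 0 ^ m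
  set F : ℝ → ℝ := fun t => a + b * ∫ s in (0:ℝ)..t, g s
  have hg : ContinuousOn g (Icc 0 T) :=
    ((hy.sub continuousOn_const).sup continuousOn_const).rpow_const fun _ _ => Or.inr (by linarith)
  have hF_ge : ∀ t ∈ Icc 0 T, a ≤ F t := fun t ht =>
    le_add_of_nonneg_right <| mul_nonneg hb.le <|
      intervalIntegral.integral_nonneg ht.1 fun s _ => by positivity
  have hF_pos : ∀ t ∈ Icc 0 T, 0 < F t := fun t ht => ha.trans_le (hF_ge t ht)
  have hgrowth : ∀ t ∈ Ioo 0 T, b / 2 ^ m * F t ^ m ≤ b * g t := by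
    intro t ht
    have ht' := Ioo_subset_Icc_self ht
    have hhalf : F t / 2 ≤ max (y t - d) 0 :=
      le_max_of_le_left (by linarith [hF_ge t ht', hineq t ht'])
    calc b / 2 ^ m * F t ^ m = b * (F t / 2) ^ m := by
          rw [div_rpow (hF_pos t ht').le zero_le_two]; ring
      _ ≤ b * max (y t - d) 0 ^ m := by gcongr; linarith [hF_pos t ht']
  have hlifespan := sub_lt_of_mul_rpow_le_deriv (F := F) (by positivity) hm hT.le
    (continuousOn_const.add
      (continuousOn_const.mul (continuousOn_integral_of_continuousOn_Icc hg hT.le)))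
    hF_pos (fun t ht => ((hasDerivAt_integral_of_continuousOn_Icc hg ht).const_mul b).const_add a)
    hgrowth
  have hF0 : F 0 = a := by simp [F]
  rw [hF0, sub_zero] at hlifespan
  convert hlifespan using 1
  field_simp

theorem stmt5 (a b d m T : ℝ) (ha : 0 < a) (hb : 0 < b) (hd : 0 < d) (hm : 1 < m)
    (had : 2 * d < a) (hT : 0 < T) (y : ℝ → ℝ)
    (hy : ContinuousOn y (Set.Icc 0 T))
    (hy0 : ∀ t ∈ Set.Icc 0 T, 0 ≤ y t)
    (hineq : ∀ t ∈ Set.Icc 0 T,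
      a + b * ∫ s in (0:ℝ)..t, (max (y s - d) 0) ^ m ≤ y t) :
    T < 2 ^ m / ((m - 1) * b * a ^ (m - 1)) :=
  stmt5_general a b d m T ha hb hm had hT y hy hineq
end

section
/- Let α>0, L>0, eps₀ = min{1, √(L/2)}, and for ε∈(0,eps₀) define z_ε(x) = ε + ∫₀^x ζ_ε(y) dy where ζ_ε∈C₀^∞((0,L)) satisfies 0≤ζ_ε≤1 and ζ_ε ≡ 1 on (ε²,L-ε²), and set g_ε = z_ε^α. Then there exist constants c₁, c₂, C>0 (independent of ε) such that c₁(x+ε)^α ≤ g_ε(x) ≤ (x+ε)^α and 0 ≤ g_{εx}(x) ≤ c₂(x+ε)^{α-1} for all x∈(0,L), and consequently g_{εx}(x)⁴/g_ε(x)³ ≤ C (x+ε)^{α-4} for all x∈(0,L) and ε∈(0,eps₀). -/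
set_option maxHeartbeats 800000


open MeasureTheory Real Set Filter

theorem stmt12 (α L : ℝ) (hα : 0 < α) (hL : 0 < L) :
    ∃ c₁ > (0:ℝ), ∃ c₂ > (0:ℝ), ∃ C > (0:ℝ),
      ∀ ε : ℝ, ε ∈ Set.Ioo 0 (min 1 (Real.sqrt (L / 2))) →
      ∀ ζ : ℝ → ℝ, ContDiff ℝ (⊤ : ℕ∞) ζ → HasCompactSupport ζ → tsupport ζ ⊆ Set.Ioo 0 L →
        (∀ y, 0 ≤ ζ y ∧ ζ y ≤ 1) → (∀ y ∈ Set.Ioo (ε ^ 2) (L - ε ^ 2), ζ y = 1) →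
        ∀ x ∈ Set.Ioo 0 L,
          c₁ * (x + ε) ^ α ≤ (ε + ∫ y in (0:ℝ)..x, ζ y) ^ α ∧
          (ε + ∫ y in (0:ℝ)..x, ζ y) ^ α ≤ (x + ε) ^ α ∧
          0 ≤ deriv (fun x' => (ε + ∫ y in (0:ℝ)..x', ζ y) ^ α) x ∧
          deriv (fun x' => (ε + ∫ y in (0:ℝ)..x', ζ y) ^ α) x ≤ c₂ * (x + ε) ^ (α - 1) ∧
          (deriv (fun x' => (ε + ∫ y in (0:ℝ)..x', ζ y) ^ α) x) ^ 4 /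
              ((ε + ∫ y in (0:ℝ)..x, ζ y) ^ α) ^ 3 ≤ C * (x + ε) ^ (α - 4) := by
  have h3pos : (0:ℝ) < 3 := by norm_num
  set c₁ : ℝ := ((3:ℝ) ^ α)⁻¹ with hc₁
  set K : ℝ := max ((3:ℝ) ^ (1 - α)) 1 with hK
  set c₂ : ℝ := α * K with hc₂
  set C : ℝ := c₂ ^ 4 / c₁ ^ 3 with hC
  have hc₁pos : 0 < c₁ := by rw [hc₁]; positivity
  have hKpos : 0 < K := lt_of_lt_of_le one_pos (le_max_right _ _)
  have hc₂pos : 0 < c₂ := mul_pos hα hKpos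
  have hCpos : 0 < C := by rw [hC]; positivity
  refine ⟨c₁, hc₁pos, c₂, hc₂pos, C, hCpos, ?_⟩
  intro ε hε ζ hζs _ _ hζb hζ1 x hx
  have hζc : Continuous ζ := hζs.continuous
  have hε0 : 0 < ε := hε.1
  have hε1 : ε < 1 := lt_of_lt_of_le hε.2 (min_le_left _ _)
  have hεsq : ε ^ 2 ≤ ε := by nlinarith
  have hεL : ε ^ 2 < L / 2 := by
    have h2 : ε < Real.sqrt (L / 2) := lt_of_lt_of_le hε.2 (min_le_right _ _)
    have h3 := Real.sq_sqrt (le_of_lt (by positivity : (0:ℝ) < L / 2))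
    nlinarith [Real.sqrt_nonneg (L / 2)]
  have hx0 : 0 < x := hx.1
  have hxL : x < L := hx.2
  set P := x + ε with hP
  have hPpos : 0 < P := by positivity
  set I := ∫ y in (0:ℝ)..x, ζ y with hI
  set z := ε + I with hz
  have hint : ∀ a b : ℝ, IntervalIntegrable ζ volume a b := fun a b =>
    hζc.intervalIntegrable a b
  have hIle : I ≤ x := by
    calc I ≤ ∫ _ in (0:ℝ)..x, (1:ℝ) := by
            apply intervalIntegral.integral_mono_on hx0.le (hint 0 x)
              intervalIntegrable_const
            exact fun y _ => (hζb y).2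
      _ = x := by simp
  have hInonneg : 0 ≤ I := intervalIntegral.integral_nonneg hx0.le (fun y _ => (hζb y).1)
  have hzle : z ≤ P := by rw [hz, hP]; linarith
  have hzpos : 0 < z := by rw [hz]; linarith
  have hzge : P / 3 ≤ z := by
    rcases le_or_gt x (2 * ε) with hcase | hcase
    · rw [hz, hP]; linarith
    · set m := min x (L - ε ^ 2) with hm
      have hm1 : ε ^ 2 ≤ m := le_min (by nlinarith) (by nlinarith)
      have hm2 : m ≤ x := min_le_left _ _
      have hm3 : x - ε ^ 2 ≤ m := le_min (by nlinarith) (by linarith)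
      have hmid : (∫ y in (ε ^ 2)..m, ζ y) = m - ε ^ 2 := by
        have heq : (∫ y in (ε ^ 2)..m, ζ y) = ∫ _ in (ε ^ 2)..m, (1:ℝ) := by
          apply intervalIntegral.integral_congr_ae
          have hset : ({m}ᶜ : Set ℝ) ∈ ae volume :=
            compl_mem_ae_iff.mpr (measure_singleton m)
          filter_upwards [hset] with y hy hmem
          rw [Set.uIoc_of_le hm1] at hmem
          apply hζ1
          refine ⟨hmem.1, ?_⟩
          have hym : y < m := lt_of_le_of_ne hmem.2 hy
          exact lt_of_lt_of_le hym (min_le_right _ _)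
        rw [heq]; simp
      have h1 : (∫ y in (0:ℝ)..(ε ^ 2), ζ y) + (∫ y in (ε ^ 2)..x, ζ y) = I :=
        intervalIntegral.integral_add_adjacent_intervals (hint _ _) (hint _ _)
      have h2 : (∫ y in (ε ^ 2)..m, ζ y) + (∫ y in m..x, ζ y) = ∫ y in (ε ^ 2)..x, ζ y :=
        intervalIntegral.integral_add_adjacent_intervals (hint _ _) (hint _ _)
      have h3 : 0 ≤ ∫ y in (0:ℝ)..(ε ^ 2), ζ y :=
        intervalIntegral.integral_nonneg (by positivity) (fun y _ => (hζb y).1)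
      have h4 : 0 ≤ ∫ y in m..x, ζ y :=
        intervalIntegral.integral_nonneg hm2 (fun y _ => (hζb y).1)
      have hIge : m - ε ^ 2 ≤ I := by rw [← h1, ← h2, hmid]; linarith
      rw [hz, hP]; linarith
  -- first conclusion
  have hglow : c₁ * P ^ α ≤ z ^ α := by
    have h := Real.rpow_le_rpow (by positivity : (0:ℝ) ≤ P / 3) hzge hα.le
    rw [Real.div_rpow hPpos.le h3pos.le] at h
    calc c₁ * P ^ α = P ^ α / (3:ℝ) ^ α := by rw [hc₁]; ring
      _ ≤ z ^ α := h
  have hgup : z ^ α ≤ P ^ α := Real.rpow_le_rpow hzpos.le hzle hα.le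
  have hgpos : 0 < z ^ α := Real.rpow_pos_of_pos hzpos α
  -- derivative
  have hFd : HasDerivAt (fun x' => ∫ y in (0:ℝ)..x', ζ y) (ζ x) x := by
    exact intervalIntegral.integral_hasDerivAt_right (hint 0 x)
      (hζc.stronglyMeasurableAtFilter volume (nhds x)) hζc.continuousAt
  have hG : HasDerivAt (fun x' => ε + ∫ y in (0:ℝ)..x', ζ y) (ζ x) x := by
    have := (hasDerivAt_const x ε).add hFd
    rw [zero_add] at this
    exact this
  have hcomp : HasDerivAt (fun x' => (ε + ∫ y in (0:ℝ)..x', ζ y) ^ α)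
      (ζ x * α * z ^ (α - 1)) x := hG.rpow_const (Or.inl hzpos.ne')
  have hD : deriv (fun x' => (ε + ∫ y in (0:ℝ)..x', ζ y) ^ α) x
      = ζ x * α * z ^ (α - 1) := hcomp.deriv
  have hzp1 : 0 < z ^ (α - 1) := Real.rpow_pos_of_pos hzpos _
  have hDnonneg : 0 ≤ deriv (fun x' => (ε + ∫ y in (0:ℝ)..x', ζ y) ^ α) x := by
    rw [hD]
    have := (hζb x).1
    positivity
  -- key power bound
  have hkey : z ^ (α - 1) ≤ K * P ^ (α - 1) := by
    rcases le_or_gt 1 α with hα1 | hα1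
    · have h := Real.rpow_le_rpow hzpos.le hzle (by linarith : 0 ≤ α - 1)
      have hK1 : (1:ℝ) ≤ K := le_max_right _ _
      have hPp : 0 < P ^ (α - 1) := Real.rpow_pos_of_pos hPpos _
      nlinarith
    · have h := Real.rpow_le_rpow_of_nonpos (by positivity : (0:ℝ) < P / 3) hzge
        (by linarith : α - 1 ≤ 0)
      have heq : (P / 3) ^ (α - 1) = (3:ℝ) ^ (1 - α) * P ^ (α - 1) := by
        rw [Real.div_rpow hPpos.le h3pos.le, div_eq_mul_inv, ← Real.rpow_neg h3pos.le]
        ring_nf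
      have hK1 : (3:ℝ) ^ (1 - α) ≤ K := le_max_left _ _
      have hPp : 0 < P ^ (α - 1) := Real.rpow_pos_of_pos hPpos _
      nlinarith
  have hDle : deriv (fun x' => (ε + ∫ y in (0:ℝ)..x', ζ y) ^ α) x ≤ c₂ * P ^ (α - 1) := by
    rw [hD, hc₂]
    have hζx := hζb x
    calc ζ x * α * z ^ (α - 1) ≤ 1 * α * z ^ (α - 1) :=
          mul_le_mul_of_nonneg_right (mul_le_mul_of_nonneg_right hζx.2 hα.le) hzp1.le
      _ = α * z ^ (α - 1) := by ring
      _ ≤ α * (K * P ^ (α - 1)) := mul_le_mul_of_nonneg_left hkey hα.le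
      _ = α * K * P ^ (α - 1) := by ring
  refine ⟨hglow, hgup, hDnonneg, hDle, ?_⟩
  -- final conclusion
  set D := deriv (fun x' => (ε + ∫ y in (0:ℝ)..x', ζ y) ^ α) x with hDdef
  have h4 : D ^ 4 ≤ (c₂ * P ^ (α - 1)) ^ 4 := pow_le_pow_left₀ hDnonneg hDle 4
  have h5 : (c₁ * P ^ α) ^ 3 ≤ (z ^ α) ^ 3 :=
    pow_le_pow_left₀ (by positivity) hglow 3
  have h6 : D ^ 4 / (z ^ α) ^ 3 ≤ (c₂ * P ^ (α - 1)) ^ 4 / (c₁ * P ^ α) ^ 3 :=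
    div_le_div₀ (by positivity) h4 (by positivity) h5
  have e1 : (P ^ (α - 1)) ^ (4:ℕ) = P ^ ((α - 1) * 4) := by
    rw [← Real.rpow_natCast (P ^ (α - 1)) 4, ← Real.rpow_mul hPpos.le]
    norm_num
  have e2 : (P ^ α) ^ (3:ℕ) = P ^ (α * 3) := by
    rw [← Real.rpow_natCast (P ^ α) 3, ← Real.rpow_mul hPpos.le]
    norm_num
  have e3 : P ^ ((α - 1) * 4) / P ^ (α * 3) = P ^ (α - 4) := by
    rw [← Real.rpow_sub hPpos]
    congr 1
    ring
  calc D ^ 4 / (z ^ α) ^ 3 ≤ (c₂ * P ^ (α - 1)) ^ 4 / (c₁ * P ^ α) ^ 3 := h6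
    _ = (c₂ ^ 4 / c₁ ^ 3) * (P ^ ((α - 1) * 4) / P ^ (α * 3)) := by
        rw [mul_pow c₂ (P ^ (α - 1)) 4, mul_pow c₁ (P ^ α) 3, e1, e2, div_mul_div_comm]
    _ = C * P ^ (α - 4) := by rw [e3, hC]
end

section
/- Let M>0, B>0, D>0, T>0, n>1, C₁,C₂,C₃>0 satisfy M ≥ 4C₁(1+T), M > 8C₃B, and M ≥ 4(2^{n+1}/(nC₂T))^{1/n}. Suppose y∈C⁰([0,T)) is nonnegative and satisfies y(t) ≥ M/2 - C₁(1+T) + C₂∫₀ᵗ (y(s)-C₃B)₊^{n+1} ds for all t∈(0,T). Then no such y can exist on all of [0,T), i.e. the assumptions lead to a contradiction. -/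
open MeasureTheory Real Set Filter Topology

theorem stmt19 (M B D T n C₁ C₂ C₃ : ℝ) (hM : 0 < M) (hB : 0 < B) (hD : 0 < D)
    (hT : 0 < T) (hn : 1 < n) (hC₁ : 0 < C₁) (hC₂ : 0 < C₂) (hC₃ : 0 < C₃)
    (h1 : 4 * C₁ * (1 + T) ≤ M) (h2 : 8 * C₃ * B < M)
    (h3 : 4 * (2 ^ (n + 1) / (n * C₂ * T)) ^ (1 / n) ≤ M)
    (y : ℝ → ℝ) (hy : ContinuousOn y (Set.Ico 0 T))
    (hy0 : ∀ t ∈ Set.Ico 0 T, 0 ≤ y t)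
    (hineq : ∀ t ∈ Set.Ioo 0 T,
      M / 2 - C₁ * (1 + T) + C₂ * ∫ s in (0:ℝ)..t, (max (y s - C₃ * B) 0) ^ (n + 1) ≤ y t) :
    False := by
  have hn0 : (0:ℝ) < n := lt_trans one_pos hn
  set t₀ : ℝ := 3 * T / 4 with ht₀def
  have ht₀0 : 0 < t₀ := by positivity
  have ht₀T : t₀ < T := by rw [ht₀def]; linarith
  set h : ℝ → ℝ := fun s => max (y s - C₃ * B) 0 with hdef
  set f : ℝ → ℝ := fun s => h s ^ (n + 1) with fdef
  have hf_nonneg : ∀ s, 0 ≤ f s := fun s => Real.rpow_nonneg (le_max_right _ _) _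
  have hh_cont : ContinuousOn h (Ico 0 T) := (hy.sub continuousOn_const).sup continuousOn_const
  have hf_cont : ContinuousOn f (Ico 0 T) :=
    hh_cont.rpow_const (fun s _ => Or.inr (by positivity))
  have hf_int : ∀ b ∈ Ico (0:ℝ) T, IntervalIntegrable f volume 0 b := by
    intro b hb
    apply ContinuousOn.intervalIntegrable
    apply hf_cont.mono
    rw [uIcc_of_le hb.1]
    exact fun x hx => ⟨hx.1, lt_of_le_of_lt hx.2 hb.2⟩
  set F : ℝ → ℝ := fun t => ∫ s in (0:ℝ)..t, f s with Fdef
  have hF0 : F 0 = 0 := intervalIntegral.integral_same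
  have hF_nonneg : ∀ t ∈ Icc (0:ℝ) t₀, 0 ≤ F t := fun t ht =>
    intervalIntegral.integral_nonneg ht.1 (fun s _ => hf_nonneg s)
  have hF_cont : ContinuousOn F (Icc 0 t₀) := by
    have := intervalIntegral.continuousOn_primitive_interval'
      (hf_int t₀ ⟨ht₀0.le, ht₀T⟩) left_mem_uIcc
    rwa [uIcc_of_le ht₀0.le] at this
  have hF_deriv : ∀ t ∈ Ioo (0:ℝ) t₀, HasDerivAt F (f t) t := by
    intro t ht
    have htT : t ∈ Ioo (0:ℝ) T := ⟨ht.1, ht.2.trans ht₀T⟩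
    have hmem : Ioo (0:ℝ) T ∈ 𝓝 t := isOpen_Ioo.mem_nhds htT
    have hca : ContinuousAt f t := (hf_cont.mono Ioo_subset_Ico_self).continuousAt hmem
    exact intervalIntegral.integral_hasDerivAt_right (hf_int t ⟨ht.1.le, htT.2⟩)
      ⟨Ioo 0 T, hmem,
        (hf_cont.mono Ioo_subset_Ico_self).aestronglyMeasurable measurableSet_Ioo⟩ hca
  set a : ℝ := M / 4 - C₃ * B with adef
  have ha : M / 8 < a := by rw [adef]; linarith
  have ha0 : 0 < a := lt_trans (by positivity : (0:ℝ) < M / 8) ha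
  have key : ∀ t ∈ Ioo (0:ℝ) T, a + C₂ * F t ≤ h t := by
    intro t ht
    have H := hineq t ht
    have hFt : (∫ s in (0:ℝ)..t, (max (y s - C₃ * B) 0) ^ (n + 1)) = F t := rfl
    rw [hFt] at H
    have h4 : y t - C₃ * B ≤ h t := le_max_left _ _
    have h5 : a + C₂ * F t ≤ y t - C₃ * B := by rw [adef]; linarith
    exact h5.trans h4
  set G : ℝ → ℝ := fun t => a + C₂ * F t with Gdef
  have hG_pos : ∀ t ∈ Icc (0:ℝ) t₀, 0 < G t := by
    intro t ht
    have h5 := mul_nonneg hC₂.le (hF_nonneg t ht)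
    have : G t = a + C₂ * F t := rfl
    linarith
  set u : ℝ → ℝ := fun t => G t ^ (-n) + n * C₂ * t with udef
  have hu_deriv : ∀ t ∈ Ioo (0:ℝ) t₀,
      HasDerivAt u (C₂ * f t * (-n) * G t ^ (-n - 1) + n * C₂) t := by
    intro t ht
    have hG : HasDerivAt G (C₂ * f t) t := ((hF_deriv t ht).const_mul C₂).const_add a
    have hGne : G t ≠ 0 := (hG_pos t ⟨ht.1.le, ht.2.le⟩).ne'
    have h' := (hG.rpow_const (p := -n) (Or.inl hGne)).add
      ((hasDerivAt_id t).const_mul (n * C₂))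
    rw [mul_one] at h'
    exact h'
  have hderiv_nonpos : ∀ t ∈ Ioo (0:ℝ) t₀,
      C₂ * f t * (-n) * G t ^ (-n - 1) + n * C₂ ≤ 0 := by
    intro t ht
    have hGt := hG_pos t ⟨ht.1.le, ht.2.le⟩
    have hk := key t ⟨ht.1, ht.2.trans ht₀T⟩
    have h1' : G t ^ (n + 1) ≤ f t := Real.rpow_le_rpow hGt.le hk (by positivity)
    have hpow : 0 < G t ^ (n + 1) := Real.rpow_pos_of_pos hGt _
    have h2' : G t ^ (-n - 1) = (G t ^ (n + 1))⁻¹ := by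
      rw [show -n - 1 = -(n + 1) by ring, Real.rpow_neg hGt.le]
    rw [h2']
    have h3' : 1 ≤ f t * (G t ^ (n + 1))⁻¹ := by
      rw [← div_eq_mul_inv, le_div_iff₀ hpow, one_mul]
      exact h1'
    have hnc : 0 < n * C₂ := mul_pos hn0 hC₂
    nlinarith
  have hu_cont : ContinuousOn u (Icc 0 t₀) := by
    have hG_cont : ContinuousOn G (Icc 0 t₀) :=
      continuousOn_const.add (continuousOn_const.mul hF_cont)
    exact (hG_cont.rpow_const (fun t ht => Or.inl (hG_pos t ht).ne')).add
      (continuous_const.mul continuous_id).continuousOn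
  have hanti : AntitoneOn u (Icc 0 t₀) := by
    apply antitoneOn_of_deriv_nonpos (convex_Icc _ _) hu_cont
    · intro t ht
      rw [interior_Icc] at ht
      exact (hu_deriv t ht).differentiableAt.differentiableWithinAt
    · intro t ht
      rw [interior_Icc] at ht
      rw [(hu_deriv t ht).deriv]
      exact hderiv_nonpos t ht
  have h0mem : (0:ℝ) ∈ Icc (0:ℝ) t₀ := ⟨le_rfl, ht₀0.le⟩
  have ht₀mem : t₀ ∈ Icc (0:ℝ) t₀ := ⟨ht₀0.le, le_rfl⟩
  have hle : u t₀ ≤ u 0 := hanti h0mem ht₀mem ht₀0.le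
  have hu0 : u 0 = a ^ (-n) := by
    have : u 0 = (a + C₂ * F 0) ^ (-n) + n * C₂ * 0 := rfl
    rw [this, hF0]
    ring_nf
  have hut₀ : u t₀ = G t₀ ^ (-n) + n * C₂ * t₀ := rfl
  have hGt₀ := hG_pos t₀ ht₀mem
  have hpos : 0 < G t₀ ^ (-n) := Real.rpow_pos_of_pos hGt₀ _
  -- bound on a ^ (-n)
  have hP : 0 < n * C₂ * T := by positivity
  have hK : (0:ℝ) < 2 ^ (n + 1) / (n * C₂ * T) := by positivity
  set K : ℝ := (2 ^ (n + 1) / (n * C₂ * T)) ^ (1 / n) with Kdef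
  have hK0 : 0 < K := Real.rpow_pos_of_pos hK _
  have haK : K / 2 < a := by linarith
  have hKn : K ^ n = 2 ^ (n + 1) / (n * C₂ * T) := by
    rw [Kdef, ← Real.rpow_mul hK.le, one_div, inv_mul_cancel₀ hn0.ne', Real.rpow_one]
  have h2n : (0:ℝ) < 2 ^ n := Real.rpow_pos_of_pos two_pos n
  have h6 : (K / 2) ^ n = 2 / (n * C₂ * T) := by
    rw [Real.div_rpow hK0.le (by norm_num : (0:ℝ) ≤ 2), hKn,
      Real.rpow_add two_pos, Real.rpow_one]
    field_simp
  have h5 : (K / 2) ^ n < a ^ n := Real.rpow_lt_rpow (by positivity) haK hn0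
  have han : 2 / (n * C₂ * T) < a ^ n := by rw [← h6]; exact h5
  have h7 : (0:ℝ) < 2 / (n * C₂ * T) := by positivity
  have hanpos : 0 < a ^ n := Real.rpow_pos_of_pos ha0 n
  have h9 : (a ^ n)⁻¹ < n * C₂ * T / 2 := by
    have h10 : (2 / (n * C₂ * T))⁻¹ = n * C₂ * T / 2 := by
      field_simp
    rw [← h10]
    exact inv_strictAnti₀ h7 han
  have hbound : a ^ (-n) < n * C₂ * T / 2 := by
    rw [Real.rpow_neg ha0.le]
    exact h9
  have h8 : n * C₂ * T / 2 < n * C₂ * t₀ := by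
    rw [ht₀def]
    nlinarith
  linarith [hle, hpos, hbound, h8, hu0, hut₀]
end
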